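/- If a set of probability measures Q on a finite space Ω is consistent with respect to a filtration (F_t), i.e. inf_{Q∈Q} E_Q[X | F_t] = inf_{Q∈Q} E_Q[ inf_{M∈Q} E_M[X | F_{t+1}] | F_t ] for every t ∈ {0,...,T-1} and every random variable X, then the constant sequence Q_t = Q is dynamically consistent: for every t, A ∈ F_t, and random variable X, 1_A · min_{ω∈A} ( inf_{Q∈Q} E_Q[X|F_{t+1}](ω) ) ≤ 1_A · inf_{Q∈Q} E_Q[X|F_t] ≤ 1_A · max_{ω∈A} ( inf_{Q∈Q} E_Q[X|F_{t+1}](ω) ). -/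

import Mathlib

open MeasureTheory
open scoped BigOperators ENNReal

/-- A probability mass function on the finite set `Ω`. -/
def IsProb {Ω : Type*} [Fintype Ω] (Q : Ω → ℝ) : Prop :=
  (∀ ω, 0 ≤ Q ω) ∧ ∑ ω, Q ω = 1

/-- Full support (equivalence with a full-support reference measure). -/
def FullSupport {Ω : Type*} (Q : Ω → ℝ) : Prop := ∀ ω, 0 < Q ω

/-- The atom of the σ-algebra `𝒢` containing `ω`. -/
def atomOf {Ω : Type*} (𝒢 : MeasurableSpace Ω) (ω : Ω) : Set Ω :=
  ⋂₀ {A : Set Ω | MeasurableSet[𝒢] A ∧ ω ∈ A}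

/-- Conditional expectation of `X` under `Q` given the σ-algebra `𝒢`, computed
pointwise on atoms (finite state space). -/
noncomputable def condExpOn {Ω : Type*} [Fintype Ω] (Q : Ω → ℝ)
    (𝒢 : MeasurableSpace Ω) (X : Ω → ℝ) (ω : Ω) : ℝ :=
  (∑ ω', (atomOf 𝒢 ω).indicator (fun u => Q u * X u) ω') /
    (∑ ω', (atomOf 𝒢 ω).indicator Q ω')

/-- `inf_{Q ∈ 𝒬} E_Q[X | 𝒢]`, pointwise in `ω`. -/
noncomputable def infCE {Ω : Type*} [Fintype Ω] (𝒬 : Set (Ω → ℝ))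
    (𝒢 : MeasurableSpace Ω) (X : Ω → ℝ) (ω : Ω) : ℝ :=
  sInf ((fun Q => condExpOn Q 𝒢 X ω) '' 𝒬)

/-- A set of probability measures is consistent w.r.t. the filtration `F`. -/
def IsConsistent {Ω : Type*} [Fintype Ω] (T : ℕ) (F : ℕ → MeasurableSpace Ω)
    (𝒬 : Set (Ω → ℝ)) : Prop :=
  ∀ t, t < T → ∀ X : Ω → ℝ, ∀ ω : Ω,
    infCE 𝒬 (F t) X ω = infCE 𝒬 (F t) (infCE 𝒬 (F (t + 1)) X) ω

/-- A sequence of sets of probability measures is dynamically consistent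
w.r.t. the filtration `F`. -/
def DynConsistent {Ω : Type*} [Fintype Ω] (T : ℕ) (F : ℕ → MeasurableSpace Ω)
    (𝒬 : ℕ → Set (Ω → ℝ)) : Prop :=
  ∀ t, t < T → ∀ A : Set Ω, MeasurableSet[F t] A → A.Nonempty →
    ∀ X : Ω → ℝ, ∀ ω ∈ A,
      (⨅ ω' : A, infCE (𝒬 (t + 1)) (F (t + 1)) X (ω' : Ω)) ≤ infCE (𝒬 t) (F t) X ω ∧
      infCE (𝒬 t) (F t) X ω ≤ ⨆ ω' : A, infCE (𝒬 (t + 1)) (F (t + 1)) X (ω' : Ω)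

/-- The set `P^e` of all full-support probability measures on `Ω`. -/
def fullSupportProbs (Ω : Type*) [Fintype Ω] : Set (Ω → ℝ) :=
  {Q | IsProb Q ∧ FullSupport Q}

/-!
Write `Y = inf_{Q ∈ 𝒬} E_Q[X | F_{t+1}]`. By consistency `inf_Q E_Q[X | F_t] = inf_Q E_Q[Y | F_t]`,
and each `E_Q[Y | F_t](ω)` is a `Q`-average of `Y` over the `F_t`-atom of `ω`, which lies in `A`;
so it is squeezed between the minimum and the maximum of `Y` on `A`. The only subtlety is a
measure `Q` giving the atom mass zero, where the conditional expectation takes the junk value `0`: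
`Q` then also gives the finer `F_{t+1}`-atom mass zero, which forces `Y(ω) ≤ 0`, and `Y(ω) = 0`
if every `Q ∈ 𝒬` does so.
-/

section

variable {Ω : Type*}

lemma atomOf_subset {𝒢 : MeasurableSpace Ω} {A : Set Ω} (hA : MeasurableSet[𝒢] A) {ω : Ω}
    (hω : ω ∈ A) : atomOf 𝒢 ω ⊆ A :=
  Set.sInter_subset_of_mem ⟨hA, hω⟩

lemma atomOf_anti {𝒢 ℋ : MeasurableSpace Ω} (h : 𝒢 ≤ ℋ) (ω : Ω) :
    atomOf ℋ ω ⊆ atomOf 𝒢 ω :=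
  Set.sInter_subset_sInter fun _ hB => ⟨h _ hB.1, hB.2⟩

variable [Fintype Ω]

noncomputable def atomSum (f : Ω → ℝ) (𝒢 : MeasurableSpace Ω) (ω : Ω) : ℝ :=
  ∑ ω', (atomOf 𝒢 ω).indicator f ω'

lemma condExpOn_eq_div (Q : Ω → ℝ) (𝒢 : MeasurableSpace Ω) (X : Ω → ℝ) (ω : Ω) :
    condExpOn Q 𝒢 X ω = atomSum (fun u => Q u * X u) 𝒢 ω / atomSum Q 𝒢 ω :=
  rfl

section atomSum

variable {Q : Ω → ℝ} {𝒢 ℋ : MeasurableSpace Ω} {ω : Ω}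

lemma atomSum_nonneg (hQ : ∀ u, 0 ≤ Q u) : 0 ≤ atomSum Q 𝒢 ω :=
  Finset.sum_nonneg fun u _ => Set.indicator_nonneg (fun x _ => hQ x) u

lemma atomSum_anti (hQ : ∀ u, 0 ≤ Q u) (h : 𝒢 ≤ ℋ) : atomSum Q ℋ ω ≤ atomSum Q 𝒢 ω :=
  Finset.sum_le_sum fun u _ =>
    Set.indicator_le_indicator_of_subset (atomOf_anti h ω) (fun x => hQ x) u

lemma atomSum_eq_zero_of_le (hQ : ∀ u, 0 ≤ Q u) (h : 𝒢 ≤ ℋ) (h0 : atomSum Q 𝒢 ω = 0) :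
    atomSum Q ℋ ω = 0 :=
  le_antisymm (h0 ▸ atomSum_anti hQ h) (atomSum_nonneg hQ)

lemma condExpOn_eq_zero_of_atomSum_eq_zero {X : Ω → ℝ} (h : atomSum Q 𝒢 ω = 0) :
    condExpOn Q 𝒢 X ω = 0 := by
  rw [condExpOn_eq_div, h, div_zero]

lemma le_condExpOn {X : Ω → ℝ} {m : ℝ} (hQ : ∀ u, 0 ≤ Q u) (hpos : 0 < atomSum Q 𝒢 ω)
    (hm : ∀ u ∈ atomOf 𝒢 ω, m ≤ X u) : m ≤ condExpOn Q 𝒢 X ω := by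
  rw [condExpOn_eq_div, le_div_iff₀ hpos, atomSum, atomSum, Finset.mul_sum]
  refine Finset.sum_le_sum fun u _ => ?_
  by_cases hu : u ∈ atomOf 𝒢 ω
  · simp only [Set.indicator_of_mem hu, mul_comm m]
    exact mul_le_mul_of_nonneg_left (hm u hu) (hQ u)
  · simp [Set.indicator_of_notMem hu]

lemma condExpOn_le {X : Ω → ℝ} {M : ℝ} (hQ : ∀ u, 0 ≤ Q u) (hpos : 0 < atomSum Q 𝒢 ω)
    (hM : ∀ u ∈ atomOf 𝒢 ω, X u ≤ M) : condExpOn Q 𝒢 X ω ≤ M := by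
  rw [condExpOn_eq_div, div_le_iff₀ hpos, atomSum, atomSum, Finset.mul_sum]
  refine Finset.sum_le_sum fun u _ => ?_
  by_cases hu : u ∈ atomOf 𝒢 ω
  · simp only [Set.indicator_of_mem hu, mul_comm M]
    exact mul_le_mul_of_nonneg_left (hM u hu) (hQ u)
  · simp [Set.indicator_of_notMem hu]

lemma min_zero_iInf_le_condExpOn (hQ : ∀ u, 0 ≤ Q u) (X : Ω → ℝ) :
    min 0 (⨅ u, X u) ≤ condExpOn Q 𝒢 X ω := by
  have : Nonempty Ω := ⟨ω⟩
  rcases (atomSum_nonneg (𝒢 := 𝒢) (ω := ω) hQ).eq_or_lt with h0 | hpos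
  · rw [condExpOn_eq_zero_of_atomSum_eq_zero h0.symm]
    exact min_le_left _ _
  · exact (min_le_right _ _).trans
      (le_condExpOn hQ hpos fun u _ => ciInf_le (Set.finite_range X).bddBelow u)

end atomSum

section infCE

variable {𝒬 : Set (Ω → ℝ)} {𝒢 ℋ : MeasurableSpace Ω} {ω : Ω}

lemma infCE_empty (X : Ω → ℝ) : infCE ∅ 𝒢 X ω = 0 := by
  simp [infCE]

lemma infCE_le_condExpOn (h𝒬 : ∀ Q ∈ 𝒬, ∀ u, 0 ≤ Q u) {Q : Ω → ℝ} (hQ : Q ∈ 𝒬)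
    (X : Ω → ℝ) : infCE 𝒬 𝒢 X ω ≤ condExpOn Q 𝒢 X ω :=
  csInf_le ⟨min 0 (⨅ u, X u), by
    rintro _ ⟨Q', hQ', rfl⟩
    exact min_zero_iInf_le_condExpOn (h𝒬 Q' hQ') X⟩ (Set.mem_image_of_mem _ hQ)

lemma infCE_nonpos_of_atomSum_eq_zero (h𝒬 : ∀ Q ∈ 𝒬, ∀ u, 0 ≤ Q u) {Q : Ω → ℝ}
    (hQ : Q ∈ 𝒬) (h0 : atomSum Q 𝒢 ω = 0) (X : Ω → ℝ) : infCE 𝒬 𝒢 X ω ≤ 0 :=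
  (infCE_le_condExpOn h𝒬 hQ X).trans (condExpOn_eq_zero_of_atomSum_eq_zero h0).le

lemma infCE_eq_zero_of_forall_atomSum_eq_zero (h0 : ∀ Q ∈ 𝒬, atomSum Q 𝒢 ω = 0) (X : Ω → ℝ) :
    infCE 𝒬 𝒢 X ω = 0 := by
  have hsub : (fun Q => condExpOn Q 𝒢 X ω) '' 𝒬 ⊆ {0} := by
    rintro _ ⟨Q, hQ, rfl⟩
    exact condExpOn_eq_zero_of_atomSum_eq_zero (h0 Q hQ)
  rcases Set.subset_singleton_iff_eq.mp hsub with h | h <;> simp [infCE, h]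

variable {A : Set Ω} {X : Ω → ℝ}

theorem iInf_infCE_le_infCE_infCE (h𝒬 : ∀ Q ∈ 𝒬, ∀ u, 0 ≤ Q u) (h𝒢ℋ : 𝒢 ≤ ℋ)
    (hA : MeasurableSet[𝒢] A) (hω : ω ∈ A) :
    ⨅ ω' : A, infCE 𝒬 ℋ X ω' ≤ infCE 𝒬 𝒢 (infCE 𝒬 ℋ X) ω := by
  have hinf_le : ∀ u ∈ A, ⨅ ω' : A, infCE 𝒬 ℋ X ω' ≤ infCE 𝒬 ℋ X u := fun u hu =>
    ciInf_le (Set.finite_range fun ω' : A => infCE 𝒬 ℋ X ω').bddBelow ⟨u, hu⟩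
  rcases 𝒬.eq_empty_or_nonempty with rfl | h𝒬ne
  · have : Nonempty A := ⟨⟨ω, hω⟩⟩
    simp only [infCE_empty, ciInf_const, le_refl]
  refine le_csInf (h𝒬ne.image _) ?_
  rintro _ ⟨Q, hQ, rfl⟩
  dsimp only
  rcases (atomSum_nonneg (𝒢 := 𝒢) (ω := ω) (h𝒬 Q hQ)).eq_or_lt with h0 | hpos
  · rw [condExpOn_eq_zero_of_atomSum_eq_zero h0.symm]
    exact (hinf_le ω hω).trans <| infCE_nonpos_of_atomSum_eq_zero h𝒬 hQ
      (atomSum_eq_zero_of_le (h𝒬 Q hQ) h𝒢ℋ h0.symm) X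
  · exact le_condExpOn (h𝒬 Q hQ) hpos fun u hu => hinf_le u (atomOf_subset hA hω hu)

theorem infCE_infCE_le_iSup_infCE (h𝒬 : ∀ Q ∈ 𝒬, ∀ u, 0 ≤ Q u) (h𝒢ℋ : 𝒢 ≤ ℋ)
    (hA : MeasurableSet[𝒢] A) (hω : ω ∈ A) :
    infCE 𝒬 𝒢 (infCE 𝒬 ℋ X) ω ≤ ⨆ ω' : A, infCE 𝒬 ℋ X ω' := by
  have hle_sup : ∀ u ∈ A, infCE 𝒬 ℋ X u ≤ ⨆ ω' : A, infCE 𝒬 ℋ X ω' := fun u hu =>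
    le_ciSup (Set.finite_range fun ω' : A => infCE 𝒬 ℋ X ω').bddAbove ⟨u, hu⟩
  by_cases hpos : ∃ Q ∈ 𝒬, 0 < atomSum Q 𝒢 ω
  · obtain ⟨Q, hQ, hpos⟩ := hpos
    exact (infCE_le_condExpOn h𝒬 hQ _).trans <|
      condExpOn_le (h𝒬 Q hQ) hpos fun u hu => hle_sup u (atomOf_subset hA hω hu)
  · push Not at hpos
    have h0 : ∀ Q ∈ 𝒬, atomSum Q 𝒢 ω = 0 := fun Q hQ =>
      (hpos Q hQ).antisymm (atomSum_nonneg (h𝒬 Q hQ))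
    have hYω : infCE 𝒬 ℋ X ω = 0 := infCE_eq_zero_of_forall_atomSum_eq_zero
      (fun Q hQ => atomSum_eq_zero_of_le (h𝒬 Q hQ) h𝒢ℋ (h0 Q hQ)) X
    rw [infCE_eq_zero_of_forall_atomSum_eq_zero h0, ← hYω]
    exact hle_sup ω hω

end infCE

end

/-- If a set `𝒬` of probability measures is consistent w.r.t. the
filtration `F`, then the constant sequence `𝒬_t = 𝒬` is dynamically consistent. -/
theorem consistent_implies_dynConsistent {Ω : Type*} [Fintype Ω] (T : ℕ)
    (F : ℕ → MeasurableSpace Ω) (hF : Monotone F) (𝒬 : Set (Ω → ℝ))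
    (hprob : ∀ Q ∈ 𝒬, IsProb Q) (hcons : IsConsistent T F 𝒬) :
    DynConsistent T F (fun _ => 𝒬) := by
  intro t ht A hA _ X ω hω
  have hnonneg : ∀ Q ∈ 𝒬, ∀ u, 0 ≤ Q u := fun Q hQ => (hprob Q hQ).1
  have hFt : F t ≤ F (t + 1) := hF t.le_succ
  dsimp only
  rw [hcons t ht X ω]
  exact ⟨iInf_infCE_le_infCE_infCE hnonneg hFt hA hω,
    infCE_infCE_le_iSup_infCE hnonneg hFt hA hω⟩
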